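/- arXiv:2408.03420 — 2 statements merged into one kernel-verified Lean document; each statement's English description precedes it below -/
import Mathlib

section
/- Let A be an (M+1)×(M+1) lower triangular real matrix that is inverse-monotone (i.e. A is invertible and all entries of A⁻¹ are non-negative), with diagonal entries of A⁻¹ denoted a*_{mm}. Let λ ≥ 0 satisfy λ·a*_{mm} < 1 for all m. If a vector U satisfies U_0 ≤ 0 and (A U)_m ≤ λ U_m for all m ≥ 1, then U_m ≤ 0 for all m. (Discrete comparison principle for δ_t^α − λ.) -/
/-- Discrete comparison principle for an inverse-monotone lower triangular matrix
shifted by `-λ`. -/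
theorem discrete_comparison_principle (M : ℕ) (A : Matrix (Fin (M + 1)) (Fin (M + 1)) ℝ)
    (hLT : ∀ i j : Fin (M + 1), i < j → A i j = 0)
    (hInv : IsUnit A.det)
    (hMono : ∀ i j : Fin (M + 1), 0 ≤ A⁻¹ i j)
    (lam : ℝ) (hlam : 0 ≤ lam)
    (hdiag : ∀ m : Fin (M + 1), lam * A⁻¹ m m < 1)
    (U : Fin (M + 1) → ℝ)
    (hU0 : U 0 ≤ 0)
    (hUm : ∀ m : Fin (M + 1), m ≠ 0 → A.mulVec U m ≤ lam * U m) :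
    ∀ m : Fin (M + 1), U m ≤ 0 := by
  haveI : Invertible A := A.invertibleOfIsUnitDet hInv
  -- A⁻¹ is lower triangular
  have hinvLT : ∀ i j : Fin (M + 1), i < j → A⁻¹ i j = 0 := by
    have hbt : A.BlockTriangular (OrderDual.toDual : Fin (M + 1) → (Fin (M + 1))ᵒᵈ) := by
      intro i j h
      exact hLT i j h
    have h2 := Matrix.blockTriangular_inv_of_blockTriangular hbt
    intro i j hij
    exact h2 hij
  -- diagonal identity
  have hdm : ∀ m : Fin (M + 1), A⁻¹ m m * A m m = 1 := by
    intro m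
    have h := Matrix.nonsing_inv_mul A hInv
    have h1 := congrFun (congrFun h m) m
    simp only [Matrix.mul_apply, Matrix.one_apply_eq] at h1
    rw [← h1, Finset.sum_eq_single m]
    · intro j _ hj
      rcases lt_or_gt_of_ne hj with hlt | hgt
      · rw [hLT j m hlt, mul_zero]
      · rw [hinvLT m j hgt, zero_mul]
    · intro h; exact absurd (Finset.mem_univ m) h
  set V := A.mulVec U with hV
  have hU : ∀ m : Fin (M + 1), U m = ∑ j, A⁻¹ m j * V j := by
    have h : A⁻¹.mulVec V = U := by
      rw [hV, Matrix.mulVec_mulVec, Matrix.nonsing_inv_mul A hInv, Matrix.one_mulVec]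
    intro m
    conv_lhs => rw [← h]
    simp [Matrix.mulVec, dotProduct]
  have hV0 : V 0 = A 0 0 * U 0 := by
    rw [hV]
    simp only [Matrix.mulVec, dotProduct]
    rw [Finset.sum_eq_single 0]
    · intro j _ hj
      have : (0 : Fin (M+1)) < j := Fin.pos_of_ne_zero hj
      rw [hLT 0 j this, zero_mul]
    · intro h; exact absurd (Finset.mem_univ 0) h
  have hA00 : 0 < A 0 0 := by
    have h1 := hdm 0
    have h2 := hMono 0 0
    nlinarith
  have hV0neg : V 0 ≤ 0 := by
    rw [hV0]
    exact mul_nonpos_of_nonneg_of_nonpos hA00.le hU0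
  suffices h : ∀ n : ℕ, ∀ hn : n < M + 1, U ⟨n, hn⟩ ≤ 0 by
    intro m; have := h m.val m.isLt; simpa using this
  intro n
  induction n using Nat.strong_induction_on with
  | _ n ih =>
    intro hn
    by_cases h0 : n = 0
    · subst h0
      exact hU0
    · set m : Fin (M + 1) := ⟨n, hn⟩ with hm
      have hm0 : m ≠ 0 := by
        simp [hm, Fin.ext_iff, h0]
      have key : U m ≤ lam * A⁻¹ m m * U m := by
        nth_rewrite 1 [hU m]
        calc ∑ j, A⁻¹ m j * V j
            ≤ ∑ j, (if j = m then lam * A⁻¹ m m * U m else 0) := by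
              apply Finset.sum_le_sum
              intro j _
              by_cases hjm : j = m
              · subst hjm
                simp only [if_pos rfl]
                have h3 := mul_le_mul_of_nonneg_left (hUm m hm0) (hMono m m)
                simp only [if_true]
                linarith [h3]
              · rw [if_neg hjm]
                rcases lt_or_gt_of_ne hjm with hlt | hgt
                · -- j < m
                  by_cases hj0 : j = 0
                  · subst hj0
                    exact mul_nonpos_of_nonneg_of_nonpos (hMono m 0) hV0neg
                  · have hVj : V j ≤ lam * U j := hUm j hj0
                    have hUj : U j ≤ 0 := by
                      have := ih j.val hlt j.isLt
                      simpa using this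
                    have : V j ≤ 0 := le_trans hVj (mul_nonpos_of_nonneg_of_nonpos hlam hUj)
                    exact mul_nonpos_of_nonneg_of_nonpos (hMono m j) this
                · rw [hinvLT m j hgt, zero_mul]
          _ = lam * A⁻¹ m m * U m := by simp
      nlinarith [hdiag m, key]
end

section
/- For the graded mesh t_j = T(j/M)^r with r ≥ 1 and 0 ≤ j ≤ M, the step sizes τ_j = t_j − t_{j−1} satisfy: the step ratios ρ_j = τ_j/τ_{j−1} are at least 1 and non-increasing in j for j ≥ 2, i.e. 1 ≤ ρ_{j+1} ≤ ρ_j for all j ≥ 2. -/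
/-!
Up to the factor `T / M ^ r`, the steps are `d(j) = j ^ r - (j - 1) ^ r`, and
`d(x + a) = r ∫_{x-1}^{x} (t + a) ^ (r - 1) dt`. Comparing integrands on `[x - 1, x]`:
`t ^ (r - 1) ≤ (t + 1) ^ (r - 1)` gives `d(x) ≤ d(x + 1)`, while `t + 1 ≤ λ t` and
`λ (t - 1) ≤ t` with `λ = x / (x - 1)` give `d(x + 1) ≤ λ ^ (r - 1) d(x)` and
`λ ^ (r - 1) d(x - 1) ≤ d(x)`, hence `d(x + 1) d(x - 1) ≤ d(x) ^ 2`.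
-/

open Set intervalIntegral

noncomputable section

namespace GradedMesh

def powStep (r x : ℝ) : ℝ := x ^ r - (x - 1) ^ r

variable {r x : ℝ}

lemma powStep_pos (hr : 0 < r) (hx : 1 ≤ x) : 0 < powStep r x := by
  have := Real.rpow_lt_rpow (x := x - 1) (y := x) (by linarith) (by linarith) hr
  unfold powStep
  linarith

lemma integral_rpow_shift (hr : 0 < r) (a : ℝ) :
    ∫ t in (x - 1)..x, (t + a) ^ (r - 1) = powStep r (x + a) / r := by
  rw [integral_comp_add_right (fun t => t ^ (r - 1)) a,
    integral_rpow (Or.inl (by linarith)), sub_add_cancel, powStep,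
    sub_add_eq_add_sub]

lemma mul_powStep_le_of_forall_le (hr : 0 < r) {a b k₁ k₂ : ℝ}
    (h : ∀ t ∈ Icc (x - 1) x, k₁ * (t + a) ^ (r - 1) ≤ k₂ * (t + b) ^ (r - 1)) :
    k₁ * powStep r (x + a) ≤ k₂ * powStep r (x + b) := by
  have hint (c : ℝ) :
      IntervalIntegrable (fun t => (t + c) ^ (r - 1)) MeasureTheory.volume (x - 1) x := by
    simpa using (intervalIntegrable_rpow' (r := r - 1) (a := x - 1 + c) (b := x + c)
      (by linarith)).comp_add_right c
  have := integral_mono_on (by linarith) ((hint a).const_mul k₁) ((hint b).const_mul k₂) h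
  rw [integral_const_mul, integral_const_mul, integral_rpow_shift hr,
    integral_rpow_shift hr, ← mul_div_assoc, ← mul_div_assoc] at this
  exact (div_le_div_iff_of_pos_right hr).1 this

lemma powStep_le_powStep_add_one (hr : 1 ≤ r) (hx : 1 ≤ x) :
    powStep r x ≤ powStep r (x + 1) := by
  simpa using mul_powStep_le_of_forall_le (x := x) (a := 0) (b := 1) (k₁ := 1) (k₂ := 1)
    (by linarith) fun t ht => by
      simpa using Real.rpow_le_rpow (by linarith [ht.1]) (by linarith) (by linarith)

lemma powStep_add_one_le (hr : 1 ≤ r) (hx : 1 < x) :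
    powStep r (x + 1) ≤ (x / (x - 1)) ^ (r - 1) * powStep r x := by
  simpa using mul_powStep_le_of_forall_le (x := x) (a := 1) (b := 0) (k₁ := 1)
    (k₂ := (x / (x - 1)) ^ (r - 1)) (by linarith) fun t ⟨ht₁, ht₂⟩ => by
      have hx₁ : 0 < x - 1 := by linarith
      rw [one_mul, add_zero, ← Real.mul_rpow (by positivity) (by linarith)]
      refine Real.rpow_le_rpow (by linarith) ?_ (by linarith)
      rw [div_mul_eq_mul_div, le_div_iff₀ hx₁]
      nlinarith

lemma mul_powStep_sub_one_le (hr : 1 ≤ r) (hx : 2 ≤ x) :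
    (x / (x - 1)) ^ (r - 1) * powStep r (x - 1) ≤ powStep r x := by
  simpa [← sub_eq_add_neg] using mul_powStep_le_of_forall_le (x := x) (a := -1) (b := 0)
    (k₁ := (x / (x - 1)) ^ (r - 1)) (k₂ := 1) (by linarith) fun t ⟨ht₁, ht₂⟩ => by
      have hx₁ : 0 < x - 1 := by linarith
      rw [one_mul, add_zero, ← sub_eq_add_neg, ← Real.mul_rpow (by positivity) (by linarith)]
      refine Real.rpow_le_rpow (mul_nonneg (by positivity) (by linarith)) ?_ (by linarith)
      rw [div_mul_eq_mul_div, div_le_iff₀ hx₁]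
      nlinarith

lemma powStep_add_one_mul_powStep_sub_one_le_sq (hr : 1 ≤ r) (hx : 2 ≤ x) :
    powStep r (x + 1) * powStep r (x - 1) ≤ powStep r x ^ 2 := by
  have h₀ := (powStep_pos (r := r) (x := x - 1) (by linarith) (by linarith)).le
  calc powStep r (x + 1) * powStep r (x - 1)
      ≤ (x / (x - 1)) ^ (r - 1) * powStep r x * powStep r (x - 1) :=
        mul_le_mul_of_nonneg_right (powStep_add_one_le hr (by linarith)) h₀
    _ = (x / (x - 1)) ^ (r - 1) * powStep r (x - 1) * powStep r x := by ring
    _ ≤ powStep r x * powStep r x :=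
        mul_le_mul_of_nonneg_right (mul_powStep_sub_one_le hr hx)
          (powStep_pos (by linarith) (by linarith)).le
    _ = powStep r x ^ 2 := (sq _).symm

lemma rpow_mesh_sub_eq {T : ℝ} {M : ℕ} {t : ℕ → ℝ} (ht : ∀ j, t j = T * ((j : ℝ) / M) ^ r)
    {k : ℕ} (hk : 1 ≤ k) : t k - t (k - 1) = T / (M : ℝ) ^ r * powStep r k := by
  rw [ht, ht, Nat.cast_sub hk, Nat.cast_one, Real.div_rpow (by positivity) (by positivity),
    Real.div_rpow (by linarith [(Nat.one_le_cast (α := ℝ)).2 hk]) (by positivity), powStep]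
  ring

end GradedMesh

end

open GradedMesh

theorem graded_mesh_step_ratios_general (T r : ℝ) (hT : 0 < T) (hr : 1 ≤ r) (M : ℕ)
    (t τ ρ : ℕ → ℝ)
    (ht : ∀ j, t j = T * ((j : ℝ) / (M : ℝ)) ^ r)
    (hτ : ∀ j, 1 ≤ j → τ j = t j - t (j - 1))
    (hρ : ∀ j, 2 ≤ j → ρ j = τ j / τ (j - 1)) :
    ∀ j, 2 ≤ j → j + 1 ≤ M → 1 ≤ ρ (j + 1) ∧ ρ (j + 1) ≤ ρ j := by
  intro j hj hjM
  have hC : T / (M : ℝ) ^ r ≠ 0 := by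
    have : (0 : ℝ) < M := by exact_mod_cast (by omega : 0 < M)
    positivity
  have hρ' (k : ℕ) (hk : 2 ≤ k) : ρ k = powStep r k / powStep r ((k : ℝ) - 1) := by
    rw [hρ k hk, hτ k (by omega), hτ (k - 1) (by omega), rpow_mesh_sub_eq ht (by omega),
      rpow_mesh_sub_eq ht (by omega), mul_div_mul_left _ _ hC, Nat.cast_sub (by omega : 1 ≤ k),
      Nat.cast_one]
  have hx : (2 : ℝ) ≤ j := by exact_mod_cast hj
  have hpos (y : ℝ) (hy : 1 ≤ y) : 0 < powStep r y := powStep_pos (by linarith) hy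
  rw [hρ' j hj, hρ' (j + 1) (by omega), Nat.cast_succ, add_sub_cancel_right,
    one_le_div (hpos _ (by linarith)), div_le_div_iff₀ (hpos _ (by linarith)) (hpos _ (by linarith)),
    ← sq]
  exact ⟨powStep_le_powStep_add_one hr (by linarith),
    powStep_add_one_mul_powStep_sub_one_le_sq hr hx⟩

/-- For the graded mesh `t_j = T(j/M)^r`, `r ≥ 1`, the step ratios `ρ_j = τ_j/τ_{j-1}`
satisfy `1 ≤ ρ_{j+1} ≤ ρ_j` for `j ≥ 2`. -/
theorem graded_mesh_step_ratios (T r : ℝ) (hT : 0 < T) (hr : 1 ≤ r) (M : ℕ) (hM : 2 ≤ M)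
    (t τ ρ : ℕ → ℝ)
    (ht : ∀ j, t j = T * ((j : ℝ) / (M : ℝ)) ^ r)
    (hτ : ∀ j, 1 ≤ j → τ j = t j - t (j - 1))
    (hρ : ∀ j, 2 ≤ j → ρ j = τ j / τ (j - 1)) :
    ∀ j, 2 ≤ j → j + 1 ≤ M → 1 ≤ ρ (j + 1) ∧ ρ (j + 1) ≤ ρ j :=
  graded_mesh_step_ratios_general T r hT hr M t τ ρ ht hτ hρ
end
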